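/- arXiv:1911.13003 — 4 statements merged into one kernel-verified Lean document; each statement's English description precedes it below -/
import Mathlib

section
/- Suppose A ∈ ℝ^{2N×2N} is a constant matrix satisfying A + Aᵀ ≥ α·Id for some α > 0. For 1 ≤ i ≤ N, let D_i ∈ ℝ^{2N×2N} be the matrix whose i-th and (N+i)-th columns coincide with those of −(Id + A K)^{-1}(Id − A K) P₂ and whose other columns are zero. Then there exists β < 0 such that the complex matrix Id − Σ_{i=1}^N D_i e^{−λ τ_i} is invertible for every λ ∈ ℂ with Re(λ) > β. -/
/-!
Write `κ = (K, K)` and `‖x‖²_κ = ∑ κₛ |xₛ|²`. Expanding squares gives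
`‖(1 - A diag κ) x‖²_κ = ‖(1 + A diag κ) x‖²_κ - 4 ⟪κ x, A (κ x)⟫`, and coercivity of `A` bounds
the last term below by a fixed multiple of `‖(1 + A diag κ) x‖²_κ`; since the two factors commute,
`(1 + A diag κ)⁻¹ (1 - A diag κ)` is a strict contraction for `‖·‖_κ`, with ratio `c < 1` say.
The swap `P₂` is an isometry because both halves of `κ` equal `K`, so `M = telCouplingMatrix` is
a strict contraction too. Finally `Id - ∑ Dᵢ e^{-λτᵢ} = Id - M E` with `E` diagonal, and for
`Re λ > β` every entry of `E` satisfies `c |Eₛ|² < 1`, so a kernel vector `v = M E v` would satisfy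
`‖v‖²_κ ≤ c ‖E v‖²_κ < ‖v‖²_κ`.
-/

open Matrix

/-- The matrix `−(Id + A K)⁻¹ (Id − A K) P₂`, where `K = diag(K₁,…,K_N,K₁,…,K_N)` and
`P₂ = ((0,Id),(Id,0))`. -/
noncomputable def telCouplingMatrix (N : ℕ) (A : Matrix (Fin N ⊕ Fin N) (Fin N ⊕ Fin N) ℝ)
    (K : Fin N → ℝ) : Matrix (Fin N ⊕ Fin N) (Fin N ⊕ Fin N) ℝ :=
  -(((1 : Matrix (Fin N ⊕ Fin N) (Fin N ⊕ Fin N) ℝ) + A * Matrix.diagonal (Sum.elim K K))⁻¹ *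
      ((1 : Matrix (Fin N ⊕ Fin N) (Fin N ⊕ Fin N) ℝ) - A * Matrix.diagonal (Sum.elim K K)) *
      Matrix.fromBlocks 0 1 1 0)

section WeightedNorm

variable {ι 𝕜 : Type*} [Fintype ι] [RCLike 𝕜]

def weightedNormSq (κ : ι → ℝ) (v : ι → 𝕜) : ℝ := ∑ s, κ s * ‖v s‖ ^ 2

lemma weightedNormSq_real (κ : ι → ℝ) (x : ι → ℝ) :
    weightedNormSq κ x = ∑ s, κ s * x s ^ 2 := by
  simp [weightedNormSq]

lemma weightedNormSq_neg (κ : ι → ℝ) (v : ι → 𝕜) :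
    weightedNormSq κ (-v) = weightedNormSq κ v := by
  simp [weightedNormSq]

lemma weightedNormSq_nonneg {κ : ι → ℝ} (hκ : ∀ s, 0 ≤ κ s) (v : ι → 𝕜) :
    0 ≤ weightedNormSq κ v :=
  Finset.sum_nonneg fun s _ => mul_nonneg (hκ s) (sq_nonneg _)

end WeightedNorm

lemma exists_pos_forall_le_of_pos {ι : Type*} [Finite ι] {κ : ι → ℝ} (hκ : ∀ s, 0 < κ s) :
    ∃ m, 0 < m ∧ ∀ s, m ≤ κ s := by
  rcases isEmpty_or_nonempty ι with hι | hι
  · exact ⟨1, one_pos, fun s => isEmptyElim s⟩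
  · obtain ⟨s₀, hs₀⟩ := Finite.exists_min κ
    exact ⟨κ s₀, hκ s₀, hs₀⟩

section Real

variable {ι : Type*} [Fintype ι]

lemma Matrix.PosSemidef.mul_dotProduct_self_le {A : Matrix ι ι ℝ} {α : ℝ} [DecidableEq ι]
    (h : (A + Aᵀ - α • (1 : Matrix ι ι ℝ)).PosSemidef) (y : ι → ℝ) :
    α * (y ⬝ᵥ y) ≤ 2 * (y ⬝ᵥ A *ᵥ y) := by
  have h0 := h.dotProduct_mulVec_nonneg y
  have hAt : y ⬝ᵥ Aᵀ *ᵥ y = y ⬝ᵥ A *ᵥ y := by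
    rw [dotProduct_mulVec, vecMul_transpose, dotProduct_comm]
  simp only [star_trivial, sub_mulVec, add_mulVec, smul_mulVec, one_mulVec, dotProduct_sub,
    dotProduct_add, dotProduct_smul, hAt, smul_eq_mul] at h0
  linarith

lemma weightedNormSq_mulVec_le (κ : ι → ℝ) (hκ : ∀ s, 0 ≤ κ s) (B : Matrix ι ι ℝ)
    (x : ι → ℝ) :
    weightedNormSq κ (B *ᵥ x) ≤ (∑ s, κ s * ∑ t, B s t ^ 2) * (x ⬝ᵥ x) := by
  rw [weightedNormSq_real, Finset.sum_mul]
  refine Finset.sum_le_sum fun s _ => ?_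
  rw [mul_assoc]
  refine mul_le_mul_of_nonneg_left ?_ (hκ s)
  simpa [mulVec, dotProduct, sq] using Finset.sum_mul_sq_le_sq_mul_sq Finset.univ (B s) x

variable [DecidableEq ι] {κ : ι → ℝ} {A : Matrix ι ι ℝ} {α : ℝ}

lemma one_add_mul_diagonal_mulVec (x : ι → ℝ) :
    (1 + A * diagonal κ) *ᵥ x = x + A *ᵥ (κ * x) := by
  rw [add_mulVec, one_mulVec, ← mulVec_mulVec]
  congr 2
  ext s
  exact mulVec_diagonal κ x s

lemma one_sub_mul_diagonal_mulVec (x : ι → ℝ) :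
    (1 - A * diagonal κ) *ᵥ x = x - A *ᵥ (κ * x) := by
  rw [sub_mulVec, one_mulVec, ← mulVec_mulVec]
  congr 2
  ext s
  exact mulVec_diagonal κ x s

lemma weightedNormSq_one_sub_mul_diagonal_mulVec (x : ι → ℝ) :
    weightedNormSq κ ((1 - A * diagonal κ) *ᵥ x) =
      weightedNormSq κ ((1 + A * diagonal κ) *ᵥ x) - 4 * ((κ * x) ⬝ᵥ A *ᵥ (κ * x)) := by
  simp only [weightedNormSq_real, one_add_mul_diagonal_mulVec, one_sub_mul_diagonal_mulVec,
    dotProduct, Finset.mul_sum, ← Finset.sum_sub_distrib, Pi.add_apply, Pi.sub_apply,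
    Pi.mul_apply]
  exact Finset.sum_congr rfl fun s _ => by ring

lemma isUnit_det_one_add_mul_diagonal (hκ : ∀ s, 0 ≤ κ s) (hα : 0 < α)
    (hA : ∀ y, α * (y ⬝ᵥ y) ≤ 2 * (y ⬝ᵥ A *ᵥ y)) :
    IsUnit (1 + A * diagonal κ).det := by
  rw [isUnit_iff_ne_zero, Ne, ← exists_mulVec_eq_zero_iff]
  rintro ⟨x, hx0, hx⟩
  rw [one_add_mul_diagonal_mulVec] at hx
  have hAx : A *ᵥ (κ * x) = -x := eq_neg_of_add_eq_zero_right hx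
  have hform : (κ * x) ⬝ᵥ A *ᵥ (κ * x) ≤ 0 := by
    rw [hAx, dotProduct_neg, neg_nonpos]
    exact Finset.sum_nonneg fun s _ => by
      simpa [Pi.mul_apply, mul_assoc] using mul_nonneg (hκ s) (mul_self_nonneg (x s))
  have hy : κ * x = 0 := by
    have := hA (κ * x)
    exact dotProduct_self_eq_zero.1
      (le_antisymm (by nlinarith) (Finset.sum_nonneg fun s _ => mul_self_nonneg _))
  rw [hy, mulVec_zero, zero_eq_neg] at hAx
  exact hx0 hAx

lemma exists_weightedNormSq_one_sub_mul_diagonal_mulVec_le (hκ : ∀ s, 0 < κ s) (hα : 0 < α)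
    (hA : ∀ y, α * (y ⬝ᵥ y) ≤ 2 * (y ⬝ᵥ A *ᵥ y)) :
    ∃ c, 0 < c ∧ c < 1 ∧ ∀ x, weightedNormSq κ ((1 - A * diagonal κ) *ᵥ x) ≤
      c * weightedNormSq κ ((1 + A * diagonal κ) *ᵥ x) := by
  obtain ⟨m, hm, hmκ⟩ := exists_pos_forall_le_of_pos hκ
  set T := ∑ s, κ s * ∑ t, (1 + A * diagonal κ) s t ^ 2
  have hT : 0 ≤ T := Finset.sum_nonneg fun s _ =>
    mul_nonneg (hκ s).le (Finset.sum_nonneg fun t _ => sq_nonneg _)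
  set ε := min (2 * α * m ^ 2 / (T + 1)) (1 / 2)
  have hε : 0 < ε := lt_min (by positivity) one_half_pos
  refine ⟨1 - ε, by linarith [min_le_right (2 * α * m ^ 2 / (T + 1)) (1 / 2)], by linarith,
    fun x => ?_⟩
  have hxx : 0 ≤ x ⬝ᵥ x := Finset.sum_nonneg fun s _ => mul_self_nonneg _
  have hxy : m ^ 2 * (x ⬝ᵥ x) ≤ (κ * x) ⬝ᵥ (κ * x) := by
    rw [dotProduct, dotProduct, Finset.mul_sum]
    refine Finset.sum_le_sum fun s _ => ?_
    have hms : m ^ 2 ≤ κ s ^ 2 := pow_le_pow_left₀ hm.le (hmκ s) 2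
    simpa [Pi.mul_apply, sq, mul_mul_mul_comm] using
      mul_le_mul_of_nonneg_right hms (mul_self_nonneg (x s))
  set W := weightedNormSq κ ((1 + A * diagonal κ) *ᵥ x)
  have hW : W ≤ (T + 1) * (x ⬝ᵥ x) := by
    nlinarith [weightedNormSq_mulVec_le κ (fun s => (hκ s).le) (1 + A * diagonal κ) x]
  have hεW : ε * W ≤ 4 * ((κ * x) ⬝ᵥ A *ᵥ (κ * x)) :=
    calc ε * W ≤ 2 * α * m ^ 2 / (T + 1) * ((T + 1) * (x ⬝ᵥ x)) :=
          mul_le_mul (min_le_left _ _) hW (weightedNormSq_nonneg (fun s => (hκ s).le) _)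
            (by positivity)
      _ = 2 * α * (m ^ 2 * (x ⬝ᵥ x)) := by field_simp
      _ ≤ 2 * α * ((κ * x) ⬝ᵥ (κ * x)) := mul_le_mul_of_nonneg_left hxy (by positivity)
      _ ≤ 4 * ((κ * x) ⬝ᵥ A *ᵥ (κ * x)) := by linarith [hA (κ * x)]
  rw [weightedNormSq_one_sub_mul_diagonal_mulVec]
  linarith

end Real

section Contraction

variable {ι 𝕜 : Type*} [Fintype ι] [DecidableEq ι] [RCLike 𝕜] {κ : ι → ℝ} {c : ℝ}

lemma weightedNormSq_nonsing_inv_mul_mulVec_le {B B' : Matrix ι ι 𝕜} (hB : IsUnit B.det)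
    (hBB' : Commute B B') (h : ∀ x, weightedNormSq κ (B' *ᵥ x) ≤ c * weightedNormSq κ (B *ᵥ x))
    (z : ι → 𝕜) : weightedNormSq κ ((B⁻¹ * B') *ᵥ z) ≤ c * weightedNormSq κ z := by
  have hz : B *ᵥ (B⁻¹ *ᵥ z) = z := by rw [mulVec_mulVec, mul_nonsing_inv B hB, one_mulVec]
  have hcomm : B⁻¹ * B' = B' * B⁻¹ := by simpa using (Matrix.Commute.zpow_left hBB' (-1)).eq
  simpa [hcomm, ← mulVec_mulVec, hz] using h (B⁻¹ *ᵥ z)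

lemma weightedNormSq_fromBlocks_swap_mulVec {n : Type*} [Fintype n] [DecidableEq n]
    (K : n → ℝ) (x : n ⊕ n → 𝕜) :
    weightedNormSq (Sum.elim K K) (fromBlocks 0 1 1 0 *ᵥ x) =
      weightedNormSq (Sum.elim K K) x := by
  have hx : x = Sum.elim (x ∘ Sum.inl) (x ∘ Sum.inr) := (Sum.elim_comp_inl_inr x).symm
  rw [hx, fromBlocks_mulVec]
  simp only [weightedNormSq, Fintype.sum_sum_type, Sum.elim_inl, Sum.elim_inr, zero_mulVec,
    one_mulVec, zero_add, add_zero]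
  exact add_comm _ _

lemma isUnit_one_sub_mul_diagonal_of_weightedNormSq_le (hκ : ∀ s, 0 < κ s) {M : Matrix ι ι 𝕜}
    (hM : ∀ v, weightedNormSq κ (M *ᵥ v) ≤ c * weightedNormSq κ v) {e : ι → 𝕜}
    (he : ∀ s, c * ‖e s‖ ^ 2 < 1) : IsUnit (1 - M * diagonal e) := by
  rw [isUnit_iff_isUnit_det, isUnit_iff_ne_zero, Ne, ← exists_mulVec_eq_zero_iff]
  rintro ⟨v, hv0, hv⟩
  rw [sub_mulVec, one_mulVec, ← mulVec_mulVec, sub_eq_zero] at hv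
  obtain ⟨s₀, hs₀⟩ := Function.ne_iff.1 hv0
  have hterm : ∀ s,
      c * (κ s * ‖(diagonal e *ᵥ v) s‖ ^ 2) = κ s * (c * ‖e s‖ ^ 2 * ‖v s‖ ^ 2) := by
    intro s
    rw [mulVec_diagonal, norm_mul, mul_pow]
    ring
  have hlt : c * weightedNormSq κ (diagonal e *ᵥ v) < weightedNormSq κ v := by
    rw [weightedNormSq, weightedNormSq, Finset.mul_sum]
    refine Finset.sum_lt_sum (fun s _ => ?_) ⟨s₀, Finset.mem_univ _, ?_⟩ <;> rw [hterm]
    · exact mul_le_mul_of_nonneg_left (mul_le_of_le_one_left (sq_nonneg _) (he s).le) (hκ s).le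
    · exact mul_lt_mul_of_pos_left (mul_lt_of_lt_one_left (by positivity) (he s₀)) (hκ s₀)
  have hcontr := hM (diagonal e *ᵥ v)
  rw [← hv] at hcontr
  linarith

end Contraction

section Complexification

variable {ι : Type*} [Fintype ι] {κ : ι → ℝ}

lemma weightedNormSq_ofReal_add_ofReal_mul_I (a b : ι → ℝ) :
    weightedNormSq κ (fun s => (a s : ℂ) + b s * Complex.I) =
      weightedNormSq κ a + weightedNormSq κ b := by
  simp only [weightedNormSq, Complex.sq_norm, Complex.normSq_add_mul_I, Real.norm_eq_abs, sq_abs,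
    mul_add, Finset.sum_add_distrib]

lemma map_ofReal_mulVec (X : Matrix ι ι ℝ) (w : ι → ℂ) :
    X.map (fun r => (r : ℂ)) *ᵥ w =
      fun s => ((X *ᵥ fun t => (w t).re) s : ℂ) + (X *ᵥ fun t => (w t).im) s * Complex.I := by
  funext s
  apply Complex.ext <;> simp [mulVec, dotProduct, Complex.re_sum, Complex.im_sum]

lemma weightedNormSq_map_ofReal_mulVec_le {X : Matrix ι ι ℝ} {c : ℝ}
    (h : ∀ x, weightedNormSq κ (X *ᵥ x) ≤ c * weightedNormSq κ x) (w : ι → ℂ) :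
    weightedNormSq κ (X.map (fun r => (r : ℂ)) *ᵥ w) ≤ c * weightedNormSq κ w := by
  have hw : w = fun s => ((w s).re : ℂ) + (w s).im * Complex.I :=
    funext fun s => (Complex.re_add_im _).symm
  rw [map_ofReal_mulVec, weightedNormSq_ofReal_add_ofReal_mul_I]
  conv_rhs => rw [hw, weightedNormSq_ofReal_add_ofReal_mul_I, mul_add]
  exact add_le_add (h _) (h _)

end Complexification

lemma exists_weightedNormSq_telCouplingMatrix_mulVec_le {N : ℕ} {K : Fin N → ℝ}
    (hK : ∀ k, 0 < K k) {A : Matrix (Fin N ⊕ Fin N) (Fin N ⊕ Fin N) ℝ} {α : ℝ} (hα : 0 < α)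
    (hA : ∀ y, α * (y ⬝ᵥ y) ≤ 2 * (y ⬝ᵥ A *ᵥ y)) :
    ∃ c, 0 < c ∧ c < 1 ∧ ∀ x, weightedNormSq (Sum.elim K K) (telCouplingMatrix N A K *ᵥ x) ≤
      c * weightedNormSq (Sum.elim K K) x := by
  have hκ : ∀ s, 0 < Sum.elim K K s := Sum.forall.2 ⟨hK, hK⟩
  obtain ⟨c, hc0, hc1, hcayley⟩ := exists_weightedNormSq_one_sub_mul_diagonal_mulVec_le hκ hα hA
  have hB := isUnit_det_one_add_mul_diagonal (fun s => (hκ s).le) hα hA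
  have hcomm : Commute (1 + A * diagonal (Sum.elim K K)) (1 - A * diagonal (Sum.elim K K)) :=
    (Commute.one_left _).add_left ((Commute.one_right _).sub_right (Commute.refl _))
  refine ⟨c, hc0, hc1, fun x => ?_⟩
  rw [telCouplingMatrix, neg_mulVec, weightedNormSq_neg, ← mulVec_mulVec,
    ← weightedNormSq_fromBlocks_swap_mulVec K x]
  exact weightedNormSq_nonsing_inv_mul_mulVec_le hB hcomm hcayley _

lemma sum_smul_map_ofReal_eq_mul_diagonal {m n : Type*} [Fintype n] [DecidableEq n]
    (M : Matrix m (n ⊕ n) ℝ) (D : n → Matrix m (n ⊕ n) ℝ)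
    (hD : ∀ i, D i = of fun r c => if c = Sum.inl i ∨ c = Sum.inr i then M r c else 0)
    (e : n → ℂ) :
    ∑ i, e i • (D i).map (fun r => (r : ℂ)) =
      M.map (fun r => (r : ℂ)) * diagonal (Sum.elim e e) := by
  ext r (j | j) <;> simp [hD, Matrix.sum_apply, mul_comm, apply_ite (fun x : ℝ => (x : ℂ))]

lemma exists_neg_forall_mul_norm_cexp_sq_lt_one {ι : Type*} [Fintype ι] {c : ℝ} (hc0 : 0 < c)
    (hc1 : c < 1) {τ : ι → ℝ} (hτ : ∀ i, 0 < τ i) :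
    ∃ β < (0 : ℝ), ∀ lam : ℂ, β < lam.re →
      ∀ i, c * ‖Complex.exp (-lam * (τ i : ℂ))‖ ^ 2 < 1 := by
  set T := 1 + ∑ i, τ i
  have hT : 0 < T := by linarith [Finset.sum_nonneg fun i (_ : i ∈ Finset.univ) => (hτ i).le]
  have hτT : ∀ i, τ i ≤ T := fun i => by
    linarith [Finset.single_le_sum (fun j _ => (hτ j).le) (Finset.mem_univ i)]
  have hβ : Real.log c / (2 * T) < 0 :=
    div_neg_of_neg_of_pos (Real.log_neg hc0 hc1) (by positivity)
  refine ⟨Real.log c / (2 * T), hβ, fun lam hlam i => ?_⟩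
  have hnorm : ‖Complex.exp (-lam * (τ i : ℂ))‖ ^ 2 = Real.exp (-2 * lam.re * τ i) := by
    rw [Complex.norm_exp, sq, ← Real.exp_add]
    congr 1
    simp only [neg_mul, Complex.neg_re, Complex.mul_re, Complex.ofReal_re, Complex.ofReal_im,
      mul_zero, sub_zero]
    ring
  calc c * ‖Complex.exp (-lam * (τ i : ℂ))‖ ^ 2
      < c * Real.exp (-2 * (Real.log c / (2 * T)) * τ i) := by
        rw [hnorm]
        exact mul_lt_mul_of_pos_left
          (Real.exp_lt_exp.2 (by linarith [mul_lt_mul_of_pos_right hlam (hτ i)])) hc0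
    _ ≤ c * Real.exp (-2 * (Real.log c / (2 * T)) * T) :=
        mul_le_mul_of_nonneg_left
          (Real.exp_le_exp.2 (by linarith [mul_le_mul_of_nonpos_left (hτT i) hβ.le])) hc0.le
    _ = 1 := by
        rw [show -2 * (Real.log c / (2 * T)) * T = -Real.log c by field_simp, Real.exp_neg,
          Real.exp_log hc0, mul_inv_cancel₀ hc0.ne']

theorem constant_dissipative_delay_spectrum_general
    (N : ℕ)
    (τ : Fin N → ℝ) (hτpos : ∀ k, 0 < τ k)
    (K : Fin N → ℝ) (hK : ∀ k, 0 < K k)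
    (A : Matrix (Fin N ⊕ Fin N) (Fin N ⊕ Fin N) ℝ)
    (α : ℝ) (hα : 0 < α)
    (hdiss : (A + Aᵀ - α • (1 : Matrix (Fin N ⊕ Fin N) (Fin N ⊕ Fin N) ℝ)).PosSemidef)
    (D : Fin N → Matrix (Fin N ⊕ Fin N) (Fin N ⊕ Fin N) ℝ)
    (hD : ∀ i : Fin N, D i = Matrix.of fun r c =>
      if c = Sum.inl i ∨ c = Sum.inr i then telCouplingMatrix N A K r c else 0) :
    ∃ β < (0 : ℝ), ∀ lam : ℂ, β < lam.re →
      IsUnit ((1 : Matrix (Fin N ⊕ Fin N) (Fin N ⊕ Fin N) ℂ) -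
        ∑ i, Complex.exp (-lam * (τ i : ℂ)) • (D i).map (fun r => (r : ℂ))) := by
  obtain ⟨c, hc0, hc1, hM⟩ :=
    exists_weightedNormSq_telCouplingMatrix_mulVec_le hK hα hdiss.mul_dotProduct_self_le
  obtain ⟨β, hβ, hdecay⟩ := exists_neg_forall_mul_norm_cexp_sq_lt_one hc0 hc1 hτpos
  refine ⟨β, hβ, fun lam hlam => ?_⟩
  rw [sum_smul_map_ofReal_eq_mul_diagonal _ D hD]
  exact isUnit_one_sub_mul_diagonal_of_weightedNormSq_le (Sum.forall.2 ⟨hK, hK⟩)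
    (weightedNormSq_map_ofReal_mulVec_le hM) (Sum.forall.2 ⟨hdecay lam hlam, hdecay lam hlam⟩)

/-- Let `A` be a constant `2N×2N` matrix with `A + Aᵀ ≥ α·Id`, `α > 0`,
and let `D i` be the matrix whose `i`-th and `(N+i)`-th columns coincide with those of
`−(Id + A K)⁻¹ (Id − A K) P₂`, the other columns being zero. Then there is `β < 0` such
that `Id − ∑ i, D i * exp (−λ τ i)` is invertible for every `λ ∈ ℂ` with `Re λ > β`. -/
theorem constant_dissipative_delay_spectrum
    (N : ℕ) (hN : 1 ≤ N)
    (τ : Fin N → ℝ) (hτpos : ∀ k, 0 < τ k) (hτmono : Monotone τ)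
    (K : Fin N → ℝ) (hK : ∀ k, 0 < K k)
    (A : Matrix (Fin N ⊕ Fin N) (Fin N ⊕ Fin N) ℝ)
    (α : ℝ) (hα : 0 < α)
    (hdiss : (A + Aᵀ - α • (1 : Matrix (Fin N ⊕ Fin N) (Fin N ⊕ Fin N) ℝ)).PosSemidef)
    (D : Fin N → Matrix (Fin N ⊕ Fin N) (Fin N ⊕ Fin N) ℝ)
    (hD : ∀ i : Fin N, D i = Matrix.of fun r c =>
      if c = Sum.inl i ∨ c = Sum.inr i then telCouplingMatrix N A K r c else 0) :
    ∃ β < (0 : ℝ), ∀ lam : ℂ, β < lam.re →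
      IsUnit ((1 : Matrix (Fin N ⊕ Fin N) (Fin N ⊕ Fin N) ℂ) -
        ∑ i, Complex.exp (-lam * (τ i : ℂ)) • (D i).map (fun r => (r : ℂ))) :=
  constant_dissipative_delay_spectrum_general N τ hτpos K hK A α hα hdiss D hD
end

section
/- Let 1 ≤ p ≤ ∞ and φ ∈ L^p([−η_M,0],ℝ^d). Then there is a unique solution z of the difference-delay system z(t) = Σ_{i=1}^M D_i(t) z(t−η_i) in L^p_loc([−η_M,∞),ℝ^d) with z = φ a.e. on [−η_M,0] and satisfying the equation for a.e. t ≥ 0. -/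
/-!
Method of steps. Every delay is at least `η₀ := η 0 > 0`, so on `[0, s + η₀]` the right-hand side
`∑ D_i(t) z(t - η_i)` only involves `z` on `[-ηM, s]`. Hence the iterates `z₀ = φ`,
`z_{n+1} = φ` on `(-∞, 0]` and `∑ D_i z_n(· - η_i)` on `(0, ∞)`, are final on `(-∞, n η₀]`, and
together they define a solution. An induction over the intervals `[-ηM, n η₀]` shows that this
solution is locally `L^p` (the `D_i` are essentially bounded and translations preserve Lebesgue
measure) and that two solutions with the same initial data agree almost everywhere.
-/

open MeasureTheory Matrix Filter Set
open scoped ENNReal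

/-- Euclidean norm of a vector in `ℝ^ι`. -/
noncomputable def euclNorm {ι : Type*} [Fintype ι] (x : ι → ℝ) : ℝ :=
  Real.sqrt (∑ j, (x j) ^ 2)

/-- `z` belongs to `L^p_loc([-ηM, ∞), ℝ^d)` and satisfies the time-varying difference-delay
system `z(t) = ∑ i, D i (t) * z (t - η i)` for a.e. `t ≥ 0` (`ηM` is the largest delay;
the values of `z` on `[-ηM, 0]` are its initial condition). -/
def DelaySol (d M : ℕ) (η : Fin M → ℝ) (D : Fin M → ℝ → Matrix (Fin d) (Fin d) ℝ)
    (ηM : ℝ) (p : ℝ≥0∞) (z : ℝ → Fin d → ℝ) : Prop :=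
  (∀ b : ℝ, MemLp z p (volume.restrict (Set.Icc (-ηM) b))) ∧
  (∀ᵐ t ∂(volume.restrict (Set.Ici (0 : ℝ))), z t = ∑ i, (D i t).mulVec (z (t - η i)))

/-- `L^p` exponential stability of the difference-delay system. -/
def DelayLpStable (d M : ℕ) (η : Fin M → ℝ) (D : Fin M → ℝ → Matrix (Fin d) (Fin d) ℝ)
    (ηM : ℝ) (p : ℝ≥0∞) : Prop :=
  ∃ C > (0 : ℝ), ∃ γ > (0 : ℝ), ∀ z, DelaySol d M η D ηM p z → ∀ t ≥ (0 : ℝ),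
    eLpNorm (fun θ => euclNorm (z (t + θ))) p (volume.restrict (Set.Icc (-ηM) 0)) ≤
      ENNReal.ofReal (C * Real.exp (-γ * t)) *
        eLpNorm (fun θ => euclNorm (z θ)) p (volume.restrict (Set.Icc (-ηM) 0))

/-- `C⁰` exponential stability of the difference-delay system: continuous solutions
(the equation holding for all `t ≥ 0` forces the compatibility condition at `t = 0`). -/
def DelayC0Stable (d M : ℕ) (η : Fin M → ℝ) (D : Fin M → ℝ → Matrix (Fin d) (Fin d) ℝ)
    (ηM : ℝ) : Prop :=
  ∃ C > (0 : ℝ), ∃ γ > (0 : ℝ), ∀ z : ℝ → Fin d → ℝ,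
    ContinuousOn z (Set.Ici (-ηM)) →
    (∀ t ≥ (0 : ℝ), z t = ∑ i, (D i t).mulVec (z (t - η i))) →
    ∀ t ≥ (0 : ℝ), ∀ θ ∈ Set.Icc (-ηM) (0 : ℝ),
      euclNorm (z (t + θ)) ≤ C * Real.exp (-γ * t) *
        ⨆ θ' : Set.Icc (-ηM) (0 : ℝ), euclNorm (z (θ' : ℝ))


section Lp

variable {α E : Type*} [MeasurableSpace α] [NormedAddCommGroup E] {μ : Measure α} {p : ℝ≥0∞}

theorem MeasureTheory.MemLp.restrict_union {s t : Set α} {f : α → E} (hs : MeasurableSet s)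
    (ht : MeasurableSet t) (hfs : MemLp f p (μ.restrict s)) (hft : MemLp f p (μ.restrict t)) :
    MemLp f p (μ.restrict (s ∪ t)) := by
  rw [← union_sdiff_self, ← memLp_indicator_iff_restrict (hs.union (ht.diff hs)),
    indicator_union_of_disjoint disjoint_sdiff_right]
  exact ((memLp_indicator_iff_restrict hs).2 hfs).add
    ((memLp_indicator_iff_restrict (ht.diff hs)).2
      (hft.mono_measure (Measure.restrict_mono sdiff_subset le_rfl)))

theorem MeasureTheory.MemLp.mulVec_of_bounded {𝕜 m n : Type*} [NormedRing 𝕜] [Fintype m]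
    [Fintype n] {A : α → Matrix m n 𝕜} {v : α → n → 𝕜} {B : ℝ}
    (hA : ∀ k l, AEStronglyMeasurable (fun x => A x k l) μ) (hB : ∀ᵐ x ∂μ, ∀ k l, ‖A x k l‖ ≤ B)
    (hv : MemLp v p μ) : MemLp (fun x => A x *ᵥ v x) p μ :=
  MemLp.of_eval fun k => memLp_finsetSum _ fun l _ =>
    (hv.eval l).mul' (memLp_top_of_bound (hA k l) B (hB.mono fun _ hx => hx k l))

end Lp

theorem Icc_induction {a h : ℝ} (ha : a ≤ 0) (hh : 0 < h) {P : Set ℝ → Prop}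
    (mono : ∀ s t, s ≤ t → P (Icc a t) → P (Icc a s))
    (union : ∀ s t, P (Icc a s) → P (Icc 0 t) → P (Icc a s ∪ Icc 0 t))
    (base : P (Icc a 0)) (step : ∀ s, 0 ≤ s → P (Icc a s) → P (Icc 0 (s + h))) (b : ℝ) :
    P (Icc a b) := by
  have key : ∀ n : ℕ, P (Icc a (n * h)) := by
    intro n
    induction n with
    | zero => simpa using base
    | succ n ih =>
      have hn : 0 ≤ n * h := by positivity
      have := union _ _ ih (step _ hn ih)
      rwa [Icc_union_Icc' (by linarith) (by linarith), min_eq_left ha,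
        max_eq_right (by linarith), ← add_one_mul, ← Nat.cast_succ] at this
  obtain ⟨n, hn⟩ := exists_nat_ge (b / h)
  exact mono _ _ ((div_le_iff₀ hh).1 hn) (key n)

section MethodOfSteps

variable {E : Type*}

def HasLag (F : (ℝ → E) → ℝ → E) (h : ℝ) : Prop :=
  ∀ ⦃u v : ℝ → E⦄ ⦃s : ℝ⦄, EqOn u v (Iic s) → EqOn (F u) (F v) (Iic (s + h))

noncomputable def stepsIterate (φ : ℝ → E) (F : (ℝ → E) → ℝ → E) : ℕ → ℝ → E
  | 0 => φ
  | n + 1 => fun t => if t ≤ 0 then φ t else F (stepsIterate φ F n) t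

theorem stepsIterate_eqOn_Iic_zero (φ : ℝ → E) (F : (ℝ → E) → ℝ → E) :
    ∀ n, EqOn (stepsIterate φ F n) φ (Iic 0)
  | 0 => eqOn_refl _ _
  | _ + 1 => fun _ ht => if_pos ht

namespace HasLag

variable {F : (ℝ → E) → ℝ → E} {h : ℝ}

theorem stepsIterate_succ_eqOn (hF : HasLag F h) (φ : ℝ → E) (n : ℕ) :
    EqOn (stepsIterate φ F (n + 1)) (stepsIterate φ F n) (Iic (n * h)) := by
  induction n with
  | zero =>
    intro t ht
    simp only [Nat.cast_zero, zero_mul] at ht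
    rw [stepsIterate_eqOn_Iic_zero φ F _ ht, stepsIterate_eqOn_Iic_zero φ F _ ht]
  | succ n ih =>
    intro t ht
    by_cases ht0 : t ≤ 0
    · rw [stepsIterate_eqOn_Iic_zero φ F _ ht0, stepsIterate_eqOn_Iic_zero φ F _ ht0]
    · simp only [stepsIterate, if_neg ht0]
      exact hF ih (by simpa [add_one_mul] using ht)

theorem stepsIterate_eqOn_of_le (hF : HasLag F h) (hh : 0 ≤ h) (φ : ℝ → E) {n m : ℕ}
    (hnm : n ≤ m) : EqOn (stepsIterate φ F m) (stepsIterate φ F n) (Iic (n * h)) := by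
  induction m, hnm using Nat.le_induction with
  | base => exact eqOn_refl _ _
  | succ m hnm ih =>
    refine EqOn.trans (fun t ht => hF.stepsIterate_succ_eqOn φ m ?_) ih
    exact (mem_Iic.1 ht).trans (mul_le_mul_of_nonneg_right (Nat.cast_le.2 hnm) hh)

theorem exists_eqOn_fixedPoint (hF : HasLag F h) (hh : 0 < h) (φ : ℝ → E) :
    ∃ z, EqOn z φ (Iic 0) ∧ EqOn z (F z) (Ioi 0) := by
  set g := stepsIterate φ F
  let z t := g ⌈t / h⌉₊ t
  have hz : ∀ n : ℕ, EqOn z (g n) (Iic (n * h)) := fun n t ht =>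
    calc z t = g (max n ⌈t / h⌉₊) t := (hF.stepsIterate_eqOn_of_le hh.le φ (le_max_right _ _)
          ((div_le_iff₀ hh).1 (Nat.le_ceil _))).symm
      _ = g n t := hF.stepsIterate_eqOn_of_le hh.le φ (le_max_left _ _) ht
  refine ⟨z, by simpa [g, stepsIterate] using hz 0, fun t ht0 => ?_⟩
  obtain ⟨n, hn⟩ := exists_nat_ge (t / h)
  have htn : t ≤ n * h := (div_le_iff₀ hh).1 hn
  calc z t = g (n + 1) t := hz (n + 1) (show t ≤ (n + 1 : ℕ) * h by push_cast; linarith)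
    _ = F (g n) t := if_neg (not_le.2 ht0)
    _ = F z t := hF (hz n).symm (show t ≤ n * h + h by linarith)

end HasLag

end MethodOfSteps

section Translation

variable {G : Type*} [MeasurableSpace G] [AddGroup G] [MeasurableAdd G]

theorem measurePreserving_sub_right_restrict_preimage (μ : Measure G) [μ.IsAddRightInvariant]
    (a : G) (s : Set G) :
    MeasurePreserving (· - a) (μ.restrict ((· - a) ⁻¹' s)) (μ.restrict s) :=
  (measurePreserving_sub_right μ a).restrict_preimage_emb
    (MeasurableEquiv.subRight a).measurableEmbedding s

variable {μ : Measure G} [μ.IsAddRightInvariant] {a : G} {s t : Set G}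

theorem ae_restrict_comp_sub_right_of_mapsTo {P : G → Prop} (hts : MapsTo (· - a) t s)
    (h : ∀ᵐ x ∂μ.restrict s, P x) : ∀ᵐ x ∂μ.restrict t, P (x - a) :=
  ae_restrict_of_ae_restrict_of_subset hts
    ((measurePreserving_sub_right_restrict_preimage μ a s).quasiMeasurePreserving.ae h)

theorem MeasureTheory.MemLp.comp_sub_right_of_mapsTo {E : Type*} [NormedAddCommGroup E]
    {p : ℝ≥0∞} {f : G → E} (hts : MapsTo (· - a) t s) (hf : MemLp f p (μ.restrict s)) :
    MemLp (fun x => f (x - a)) p (μ.restrict t) :=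
  (hf.comp_measurePreserving (measurePreserving_sub_right_restrict_preimage μ a s)).mono_measure
    (Measure.restrict_mono hts le_rfl)

end Translation

theorem mapsTo_sub_Icc_zero {a c h s : ℝ} (hha : h ≤ a) (hac : a ≤ c) :
    MapsTo (· - a) (Icc 0 (s + h)) (Icc (-c) s) :=
  fun _ ht => ⟨by linarith [ht.1], by linarith [ht.2]⟩

section Delay

variable {ι n : Type*} [Fintype ι] [Fintype n] {η : ι → ℝ} {D : ι → ℝ → Matrix n n ℝ}
  {h c s : ℝ} {p : ℝ≥0∞}

def delayRHS (η : ι → ℝ) (D : ι → ℝ → Matrix n n ℝ) (z : ℝ → n → ℝ) (t : ℝ) : n → ℝ :=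
  ∑ i, D i t *ᵥ z (t - η i)

theorem hasLag_delayRHS (hη : ∀ i, h ≤ η i) : HasLag (delayRHS η D) h :=
  fun _ _ _ huv t ht => Finset.sum_congr rfl fun i _ => by
    rw [huv (show t - η i ≤ _ by linarith [hη i, mem_Iic.1 ht])]

theorem delayRHS_ae_congr (hη : ∀ i, h ≤ η i ∧ η i ≤ c) {u v : ℝ → n → ℝ}
    (huv : u =ᵐ[volume.restrict (Icc (-c) s)] v) :
    delayRHS η D u =ᵐ[volume.restrict (Icc 0 (s + h))] delayRHS η D v := by
  filter_upwards [ae_all_iff.2 fun i =>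
    ae_restrict_comp_sub_right_of_mapsTo (mapsTo_sub_Icc_zero (hη i).1 (hη i).2) huv] with t ht
  exact Finset.sum_congr rfl fun i _ => by rw [ht i]

theorem MeasureTheory.MemLp.delayRHS (hDmeas : ∀ i k l, Measurable fun t => D i t k l)
    (hDbdd : ∀ i, ∃ B : ℝ, ∀ᵐ t ∂(volume.restrict (Ici (0 : ℝ))), ∀ k l, |D i t k l| ≤ B)
    (hη : ∀ i, h ≤ η i ∧ η i ≤ c) {u : ℝ → n → ℝ}
    (hu : MemLp u p (volume.restrict (Icc (-c) s))) :
    MemLp (delayRHS η D u) p (volume.restrict (Icc 0 (s + h))) := by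
  refine memLp_finsetSum _ fun i _ => ?_
  obtain ⟨B, hB⟩ := hDbdd i
  refine (hu.comp_sub_right_of_mapsTo (mapsTo_sub_Icc_zero (hη i).1 (hη i).2)).mulVec_of_bounded
    (B := B) (fun k l => (hDmeas i k l).aestronglyMeasurable) ?_
  exact (ae_restrict_of_ae_restrict_of_subset Icc_subset_Ici_self hB).mono fun t ht k l => ht k l

theorem memLp_Icc_of_ae_eq_delayRHS (hDmeas : ∀ i k l, Measurable fun t => D i t k l)
    (hDbdd : ∀ i, ∃ B : ℝ, ∀ᵐ t ∂(volume.restrict (Ici (0 : ℝ))), ∀ k l, |D i t k l| ≤ B)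
    (hh : 0 < h) (hc : 0 ≤ c) (hη : ∀ i, h ≤ η i ∧ η i ≤ c) {z : ℝ → n → ℝ}
    (hz : z =ᵐ[volume.restrict (Ici 0)] delayRHS η D z)
    (hz₀ : MemLp z p (volume.restrict (Icc (-c) 0))) (b : ℝ) :
    MemLp z p (volume.restrict (Icc (-c) b)) :=
  Icc_induction (P := fun s => MemLp z p (volume.restrict s)) (neg_nonpos.2 hc) hh
    (fun _ _ hst hzt => hzt.mono_measure (Measure.restrict_mono (Icc_subset_Icc_right hst) le_rfl))
    (fun _ _ => MemLp.restrict_union measurableSet_Icc measurableSet_Icc) hz₀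
    (fun _ _ hs => (hs.delayRHS hDmeas hDbdd hη).ae_eq
      (ae_restrict_of_ae_restrict_of_subset Icc_subset_Ici_self hz.symm)) b

theorem ae_eq_Ici_of_ae_eq_delayRHS (hh : 0 < h) (hc : 0 ≤ c) (hη : ∀ i, h ≤ η i ∧ η i ≤ c)
    {u v : ℝ → n → ℝ} (hu : u =ᵐ[volume.restrict (Ici 0)] delayRHS η D u)
    (hv : v =ᵐ[volume.restrict (Ici 0)] delayRHS η D v)
    (huv₀ : u =ᵐ[volume.restrict (Icc (-c) 0)] v) : u =ᵐ[volume.restrict (Ici (-c))] v := by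
  have hIcc : ∀ b, u =ᵐ[volume.restrict (Icc (-c) b)] v := by
    refine Icc_induction (P := fun s => u =ᵐ[volume.restrict s] v) (neg_nonpos.2 hc) hh
      (fun _ _ hst h => ae_restrict_of_ae_restrict_of_subset (Icc_subset_Icc_right hst) h)
      (fun _ _ hs ht => (ae_restrict_union_iff _ _ _).2 ⟨hs, ht⟩) huv₀ fun s _ hs => ?_
    filter_upwards [ae_restrict_of_ae_restrict_of_subset Icc_subset_Ici_self hu,
      ae_restrict_of_ae_restrict_of_subset Icc_subset_Ici_self hv, delayRHS_ae_congr hη hs]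
      with t hut hvt huvt
    rw [hut, hvt, huvt]
  have hcover : Ici (-c) ⊆ ⋃ n : ℕ, Icc (-c) n := fun t ht =>
    mem_iUnion.2 ⟨⌈t⌉₊, ht, Nat.le_ceil t⟩
  exact ae_restrict_of_ae_restrict_of_subset hcover ((ae_restrict_iUnion_iff _ _).2 (hIcc ·))

end Delay

/-- For `1 ≤ p ≤ ∞` and `φ ∈ L^p([−ηM,0], ℝ^d)` there is a solution of the
difference-delay system in `L^p_loc([−ηM,∞), ℝ^d)` equal to `φ` a.e. on `[−ηM,0]`, and it is
unique up to a.e. equality on `[−ηM,∞)`. -/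
theorem delay_existence_uniqueness
    (d M : ℕ) (hM : 1 ≤ M)
    (η : Fin M → ℝ) (hηpos : ∀ i, 0 < η i) (hηmono : Monotone η)
    (D : Fin M → ℝ → Matrix (Fin d) (Fin d) ℝ)
    (hDmeas : ∀ i k l, Measurable fun t => D i t k l)
    (hDbdd : ∀ i, ∃ B : ℝ, ∀ᵐ t ∂(volume.restrict (Set.Ici (0 : ℝ))), ∀ k l, |D i t k l| ≤ B)
    (ηM : ℝ) (hηM : ηM = η ⟨M - 1, by omega⟩)
    (p : ℝ≥0∞)
    (φ : ℝ → Fin d → ℝ) (hφ : MemLp φ p (volume.restrict (Set.Icc (-ηM) 0))) :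
    (∃ z, DelaySol d M η D ηM p z ∧ z =ᵐ[volume.restrict (Set.Icc (-ηM) 0)] φ) ∧
    (∀ z z', DelaySol d M η D ηM p z → z =ᵐ[volume.restrict (Set.Icc (-ηM) 0)] φ →
      DelaySol d M η D ηM p z' → z' =ᵐ[volume.restrict (Set.Icc (-ηM) 0)] φ →
      z =ᵐ[volume.restrict (Set.Ici (-ηM))] z') := by
  set η₀ := η ⟨0, by omega⟩
  have hη₀ : 0 < η₀ := hηpos _
  have hη : ∀ i, η₀ ≤ η i ∧ η i ≤ ηM := fun i =>
    ⟨hηmono (Nat.zero_le _), hηM ▸ hηmono (Nat.le_sub_one_of_lt i.2)⟩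
  have hηM₀ : 0 ≤ ηM := hη₀.le.trans (hη _).2
  refine ⟨?_, fun w w' hw hwφ hw' hw'φ =>
    ae_eq_Ici_of_ae_eq_delayRHS hη₀ hηM₀ hη hw.2 hw'.2 (hwφ.trans hw'φ.symm)⟩
  obtain ⟨z, hzφ, hzF⟩ :=
    (hasLag_delayRHS (D := D) fun i => (hη i).1).exists_eqOn_fixedPoint hη₀ φ
  have hz : z =ᵐ[volume.restrict (Ici 0)] delayRHS η D z := by
    rw [Measure.restrict_congr_set Ioi_ae_eq_Ici.symm]
    exact ae_restrict_of_forall_mem measurableSet_Ioi hzF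
  have hzφ' : z =ᵐ[volume.restrict (Icc (-ηM) 0)] φ :=
    ae_restrict_of_forall_mem measurableSet_Icc fun t ht => hzφ ht.2
  exact ⟨z, ⟨memLp_Icc_of_ae_eq_delayRHS hDmeas hDbdd hη₀ hηM₀ hη hz (hφ.ae_eq hzφ'.symm), hz⟩,
    hzφ'⟩
end

section
/- Let Q be a real n×n matrix with Q + Qᵀ positive definite. Then Id + Q is invertible, there is a unique n×n matrix R with (Id + Q)R = Id − Q, and its spectral norm satisfies ‖R‖ < 1. Conversely, if R is a real n×n matrix with spectral norm ‖R‖ < 1, then Id + R is invertible, there is a unique n×n matrix Q with (Id + Q)R = Id − Q, and Q + Qᵀ ≥ ((1 − ‖R‖)/(1 + ‖R‖))·Id. -/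
open Matrix

/-- Spectral norm of a real matrix: the operator norm with respect to the Euclidean norm. -/
noncomputable def specNorm {ι : Type*} [Fintype ι] [DecidableEq ι] (B : Matrix ι ι ℝ) : ℝ :=
  ‖Matrix.toEuclideanCLM (𝕜 := ℝ) B‖

/-!
The Cayley relation `(1 + Q) R = 1 - Q` is symmetric in `Q` and `R` (it reads `Q + R + Q R = 1`),
and in the form `Q (x + R x) = x - R x` it gives `⟪x + R x, Q (x + R x)⟫ = ‖x‖² - ‖R x‖²`.
So positivity of the quadratic form of `Q` makes `R` a strict contraction on every nonzero vector,
whence `‖R‖ < 1` by compactness of the unit sphere. Conversely, if `‖R‖ < 1` then `1 + R` is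
invertible (Neumann series), every vector is `y + R y`, and the bounds `‖R y‖ ≤ ‖R‖ ‖y‖`,
`‖y + R y‖ ≤ (1 + ‖R‖) ‖y‖` turn the identity into `⟪x, Q x⟫ ≥ (1 - ‖R‖) / (1 + ‖R‖) ‖x‖²`.
-/

open scoped RealInnerProductSpace

section Ring

variable {A : Type*} [Ring A]

theorem one_add_mul_eq_one_sub_iff {q r : A} : (1 + q) * r = 1 - q ↔ q * (1 + r) = 1 - r := by
  have h : (1 + q) * r - (1 - q) = q * (1 + r) - (1 - r) := by noncomm_ring
  rw [← sub_eq_zero, h, sub_eq_zero]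

theorem IsUnit.existsUnique_mul_eq {a : A} (ha : IsUnit a) (b : A) : ∃! x, a * x = b := by
  obtain ⟨u, rfl⟩ := ha
  exact ⟨↑u⁻¹ * b, by simp, fun x hx => by simp [← hx]⟩

theorem IsUnit.existsUnique_mul_eq' {a : A} (ha : IsUnit a) (b : A) : ∃! x, x * a = b := by
  obtain ⟨u, rfl⟩ := ha
  exact ⟨b * ↑u⁻¹, by simp, fun x hx => by simp [← hx]⟩

end Ring

theorem isUnit_one_add_of_norm_lt_one {R : Type*} [NormedRing R] [HasSummableGeomSeries R] {x : R}
    (h : ‖x‖ < 1) : IsUnit (1 + x) := by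
  simpa using isUnit_one_sub_of_norm_lt_one (x := -x) (by rwa [norm_neg])

theorem ContinuousLinearMap.norm_lt_one_of_forall_norm_apply_lt {E F : Type*}
    [NormedAddCommGroup E] [NormedSpace ℝ E] [FiniteDimensional ℝ E]
    [NormedAddCommGroup F] [NormedSpace ℝ F] {S : E →L[ℝ] F} (h : ∀ x ≠ 0, ‖S x‖ < ‖x‖) :
    ‖S‖ < 1 := by
  rw [← S.sSup_sphere_eq_norm]
  rcases (Metric.sphere (0 : E) 1).eq_empty_or_nonempty with hempty | hne
  · simp [hempty]
  refine ((isCompact_sphere 0 1).sSup_lt_iff_of_continuous hne (by fun_prop) 1).2 fun x hx => ?_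
  rw [← mem_sphere_zero_iff_norm.1 hx]
  exact h x (ne_zero_of_mem_unit_sphere ⟨x, hx⟩)

section InnerProductSpace

variable {E : Type*} [NormedAddCommGroup E] [InnerProductSpace ℝ E] {T S : E →L[ℝ] E}

theorem real_inner_add_sub_eq_norm_sq_sub_norm_sq (x y : E) :
    ⟪x + y, x - y⟫ = ‖x‖ ^ 2 - ‖y‖ ^ 2 := by
  rw [inner_add_left, inner_sub_right, inner_sub_right, real_inner_self_eq_norm_sq,
    real_inner_self_eq_norm_sq, real_inner_comm x y]
  ring

theorem ContinuousLinearMap.apply_add_apply_of_mul_one_add (h : T * (1 + S) = 1 - S) (x : E) :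
    T (x + S x) = x - S x := by
  simpa using congrArg (· x) h

theorem ContinuousLinearMap.isUnit_one_add_of_inner_pos [FiniteDimensional ℝ E]
    (hT : ∀ x ≠ 0, 0 < ⟪x, T x⟫) : IsUnit (1 + T) := by
  have hinj : Function.Injective (1 + T : E →L[ℝ] E) := by
    refine (injective_iff_map_eq_zero _).2 fun x hx => ?_
    by_contra hx0
    have hTx : T x = -x := by simpa [add_eq_zero_iff_eq_neg'] using hx
    have := hT x hx0
    rw [hTx, inner_neg_right, real_inner_self_eq_norm_sq] at this
    linarith [sq_nonneg ‖x‖]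
  exact ContinuousLinearMap.isUnit_iff_bijective.2
    ⟨hinj, (LinearMap.injective_iff_surjective (f := ((1 + T : E →L[ℝ] E) : E →ₗ[ℝ] E))).1 hinj⟩

theorem ContinuousLinearMap.norm_apply_lt_of_mul_one_add (hT : ∀ x ≠ 0, 0 < ⟪x, T x⟫)
    (h : T * (1 + S) = 1 - S) {x : E} (hx : x ≠ 0) : ‖S x‖ < ‖x‖ := by
  have hTw := T.apply_add_apply_of_mul_one_add h x
  rcases eq_or_ne (x + S x) 0 with hw | hw
  · have hSx : S x = -x := eq_neg_of_add_eq_zero_right hw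
    rw [hw, map_zero, hSx, sub_neg_eq_add, eq_comm, ← two_smul ℝ x, smul_eq_zero] at hTw
    exact absurd (hTw.resolve_left two_ne_zero) hx
  have hpos := hT _ hw
  rw [hTw, real_inner_add_sub_eq_norm_sq_sub_norm_sq, sub_pos] at hpos
  exact lt_of_pow_lt_pow_left₀ 2 (norm_nonneg x) hpos

theorem ContinuousLinearMap.norm_lt_one_of_mul_one_add [FiniteDimensional ℝ E]
    (hT : ∀ x ≠ 0, 0 < ⟪x, T x⟫) (h : T * (1 + S) = 1 - S) : ‖S‖ < 1 :=
  S.norm_lt_one_of_forall_norm_apply_lt fun _ hx => T.norm_apply_lt_of_mul_one_add hT h hx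

theorem ContinuousLinearMap.inner_apply_ge_of_mul_one_add [CompleteSpace E] (hS : ‖S‖ < 1)
    (h : T * (1 + S) = 1 - S) (x : E) :
    (1 - ‖S‖) / (1 + ‖S‖) * ‖x‖ ^ 2 ≤ ⟪x, T x⟫ := by
  obtain ⟨y, rfl⟩ := (isUnit_iff_bijective.1 (isUnit_one_add_of_norm_lt_one hS)).2 x
  have hy : (1 + S) y = y + S y := rfl
  rw [hy, T.apply_add_apply_of_mul_one_add h, real_inner_add_sub_eq_norm_sq_sub_norm_sq]
  set r := ‖S‖
  have hr : 0 ≤ r := norm_nonneg S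
  have hSy : ‖S y‖ ≤ r * ‖y‖ := S.le_opNorm y
  have hsum : ‖y + S y‖ ≤ (1 + r) * ‖y‖ := by linarith [norm_add_le y (S y)]
  calc (1 - r) / (1 + r) * ‖y + S y‖ ^ 2
      ≤ (1 - r) / (1 + r) * ((1 + r) * ‖y‖) ^ 2 := by gcongr
    _ = ‖y‖ ^ 2 - (r * ‖y‖) ^ 2 := by field_simp; ring
    _ ≤ ‖y‖ ^ 2 - ‖S y‖ ^ 2 := by gcongr

end InnerProductSpace

namespace Matrix

theorem dotProduct_add_transpose_mulVec {n R : Type*} [Fintype n] [CommSemiring R]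
    (A : Matrix n n R) (x : n → R) : x ⬝ᵥ (A + Aᵀ) *ᵥ x = 2 * (x ⬝ᵥ A *ᵥ x) := by
  rw [add_mulVec, dotProduct_add, dotProduct_mulVec x Aᵀ, vecMul_transpose, dotProduct_comm,
    two_mul]

variable {n : Type*} [Fintype n] [DecidableEq n]

theorem inner_toEuclideanCLM_pos_of_posDef_add_transpose {Q : Matrix n n ℝ} (hQ : (Q + Qᵀ).PosDef)
    {x : EuclideanSpace ℝ n} (hx : x ≠ 0) : 0 < ⟪x, toEuclideanCLM (𝕜 := ℝ) Q x⟫ := by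
  have := hQ.dotProduct_mulVec_pos (x := WithLp.ofLp x) (by simpa using hx)
  rw [star_trivial, dotProduct_add_transpose_mulVec] at this
  rw [inner_toEuclideanCLM]
  linarith

theorem posSemidef_add_transpose_sub_smul_one {Q : Matrix n n ℝ} {c : ℝ} (hc : 0 ≤ c)
    (h : ∀ x, c * ‖x‖ ^ 2 ≤ ⟪x, toEuclideanCLM (𝕜 := ℝ) Q x⟫) :
    (Q + Qᵀ - c • 1).PosSemidef := by
  refine posSemidef_iff_dotProduct_mulVec.2 ⟨?_, fun x => ?_⟩
  · simp [IsHermitian, conjTranspose_eq_transpose_of_trivial, add_comm]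
  have hx := h (WithLp.toLp 2 x)
  have hnonneg : 0 ≤ c * ‖WithLp.toLp 2 x‖ ^ 2 := by positivity
  rw [← real_inner_self_eq_norm_sq, EuclideanSpace.inner_eq_star_dotProduct] at hx hnonneg
  rw [inner_toEuclideanCLM] at hx
  simp only [star_trivial, sub_mulVec, dotProduct_sub, dotProduct_add_transpose_mulVec,
    smul_mulVec, one_mulVec, dotProduct_smul, smul_eq_mul] at hx hnonneg ⊢
  linarith

variable {Q R : Matrix n n ℝ}

theorem toEuclideanCLM_mul_one_add_eq (h : (1 + Q) * R = 1 - Q) :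
    toEuclideanCLM (𝕜 := ℝ) Q * (1 + toEuclideanCLM (𝕜 := ℝ) R) =
      1 - toEuclideanCLM (𝕜 := ℝ) R := by
  simpa using congrArg (toEuclideanCLM (𝕜 := ℝ)) (one_add_mul_eq_one_sub_iff.1 h)

theorem isUnit_one_add_of_posDef_add_transpose (hQ : (Q + Qᵀ).PosDef) : IsUnit (1 + Q) := by
  rw [← isUnit_map_iff (toEuclideanCLM (𝕜 := ℝ)), map_add, map_one]
  exact ContinuousLinearMap.isUnit_one_add_of_inner_pos fun _ hx =>
    inner_toEuclideanCLM_pos_of_posDef_add_transpose hQ hx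

theorem specNorm_lt_one_of_one_add_mul_eq (hQ : (Q + Qᵀ).PosDef) (h : (1 + Q) * R = 1 - Q) :
    specNorm R < 1 :=
  ContinuousLinearMap.norm_lt_one_of_mul_one_add
    (fun _ hx => inner_toEuclideanCLM_pos_of_posDef_add_transpose hQ hx)
    (toEuclideanCLM_mul_one_add_eq h)

theorem isUnit_one_add_of_specNorm_lt_one (hR : specNorm R < 1) : IsUnit (1 + R) := by
  rw [← isUnit_map_iff (toEuclideanCLM (𝕜 := ℝ)), map_add, map_one]
  exact isUnit_one_add_of_norm_lt_one hR

theorem posSemidef_of_one_add_mul_eq (hR : specNorm R < 1) (h : (1 + Q) * R = 1 - Q) :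
    (Q + Qᵀ - ((1 - specNorm R) / (1 + specNorm R)) • 1).PosSemidef :=
  posSemidef_add_transpose_sub_smul_one
    (div_nonneg (sub_nonneg.2 hR.le) (add_nonneg zero_le_one (norm_nonneg _)))
    (ContinuousLinearMap.inner_apply_ge_of_mul_one_add hR (toEuclideanCLM_mul_one_add_eq h))

end Matrix

/-- If `Q + Qᵀ` is positive definite then `Id + Q` is invertible, the
equation `(Id + Q) R = Id − Q` has a unique solution `R`, and `‖R‖ < 1` in spectral norm.
Conversely, if `‖R‖ < 1` then `Id + R` is invertible, there is a unique `Q'` with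
`(Id + Q') R = Id − Q'`, and `Q' + Q'ᵀ ≥ ((1 − ‖R‖)/(1 + ‖R‖))·Id`. -/
theorem cayley_dissipative_contractive
    (n : ℕ) (Q : Matrix (Fin n) (Fin n) ℝ) (hQ : (Q + Qᵀ).PosDef) :
    (IsUnit ((1 : Matrix (Fin n) (Fin n) ℝ) + Q) ∧
      (∃! R : Matrix (Fin n) (Fin n) ℝ, (1 + Q) * R = 1 - Q) ∧
      (∀ R : Matrix (Fin n) (Fin n) ℝ, (1 + Q) * R = 1 - Q → specNorm R < 1)) ∧
    (∀ R : Matrix (Fin n) (Fin n) ℝ, specNorm R < 1 →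
      IsUnit ((1 : Matrix (Fin n) (Fin n) ℝ) + R) ∧
      (∃! Q' : Matrix (Fin n) (Fin n) ℝ, (1 + Q') * R = 1 - Q') ∧
      (∀ Q' : Matrix (Fin n) (Fin n) ℝ, (1 + Q') * R = 1 - Q' →
        (Q' + Q'ᵀ - ((1 - specNorm R) / (1 + specNorm R)) •
          (1 : Matrix (Fin n) (Fin n) ℝ)).PosSemidef)) := by
  have hQunit := isUnit_one_add_of_posDef_add_transpose hQ
  refine ⟨⟨hQunit, hQunit.existsUnique_mul_eq _, fun R => specNorm_lt_one_of_one_add_mul_eq hQ⟩,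
    fun R hR => ⟨isUnit_one_add_of_specNorm_lt_one hR, ?_,
      fun Q' => posSemidef_of_one_add_mul_eq hR⟩⟩
  simp_rw [one_add_mul_eq_one_sub_iff]
  exact (isUnit_one_add_of_specNorm_lt_one hR).existsUnique_mul_eq' _
end

section
/- Let A : [0,∞) → ℝ^{2N×2N} be measurable, essentially bounded, and satisfy A(t) + A(t)ᵀ ≥ α·Id for some α > 0 and a.e. t ≥ 0. Then there exists γ ∈ (0,1) such that for a.e. t ≥ 0 the spectral norm of K^{1/2} (Id + A(t)K)^{-1} (Id − A(t)K) P₂ K^{−1/2} is at most γ; equivalently, the operator norm of (Id + A(t)K)^{-1}(Id − A(t)K) P₂ with respect to the norm ‖x‖_K = ‖K^{1/2} x‖ is at most γ < 1 uniformly in t. -/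
open MeasureTheory Matrix Filter Set
open scoped ENNReal

/-!
Conjugating by `S = K^{1/2}` turns the matrix into `C(M) P₂` with `M = S A S` and
`C(M) = (1 + M)⁻¹ (1 - M)` the Cayley transform; `P₂` is orthogonal, so only `‖C(M)‖` matters.
For `y = (1 + M) z` one has `C(M) y = z - M z` and
`‖z - M z‖² = ‖z + M z‖² - 4 ⟪z, M z⟫`. Dissipativity gives `⟪z, M z⟫ ≥ β ‖z‖²` with
`β = α / (2 ‖S⁻¹‖²)`, while `‖z + M z‖ ≤ (1 + ‖S‖² ‖A‖) ‖z‖`; hence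
`‖C(M)‖² ≤ 1 - 4 β / (1 + ‖S‖² ‖A‖)²`, uniformly in `t` since `A` is essentially bounded.
-/

open scoped Matrix.Norms.L2Operator RealInnerProductSpace

theorem norm_sub_le_sqrt_mul_norm_add {E : Type*} [NormedAddCommGroup E] [InnerProductSpace ℝ E]
    {z m : E} {β c : ℝ} (hβ : 0 ≤ β) (hc : 0 < c) (hcoer : β * ‖z‖ ^ 2 ≤ ⟪z, m⟫)
    (hbound : ‖z + m‖ ≤ c * ‖z‖) :
    ‖z - m‖ ≤ √(1 - 4 * β / c ^ 2) * ‖z + m‖ := by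
  have hsq : ‖z + m‖ ^ 2 ≤ c ^ 2 * ‖z‖ ^ 2 := by
    rw [← mul_pow]
    exact pow_le_pow_left₀ (norm_nonneg _) hbound 2
  have hdiv : β / c ^ 2 * ‖z + m‖ ^ 2 ≤ β * ‖z‖ ^ 2 := by
    rw [div_mul_eq_mul_div, div_le_iff₀ (by positivity)]
    nlinarith
  have hsq_sub : ‖z - m‖ ^ 2 ≤ (1 - 4 * β / c ^ 2) * ‖z + m‖ ^ 2 := by
    have h_sub := norm_sub_sq_real z m
    have h_add := norm_add_sq_real z m
    rw [mul_div_assoc]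
    nlinarith
  rw [← Real.sqrt_sq (norm_nonneg (z - m)), ← Real.sqrt_sq (norm_nonneg (z + m)),
    ← Real.sqrt_mul' _ (by positivity)]
  exact Real.sqrt_le_sqrt hsq_sub

theorem EuclideanSpace.norm_sq_eq_dotProduct {ι : Type*} [Fintype ι] (x : EuclideanSpace ℝ ι) :
    ‖x‖ ^ 2 = x.ofLp ⬝ᵥ x.ofLp := by
  rw [← real_inner_self_eq_norm_sq, EuclideanSpace.inner_eq_star_dotProduct, star_trivial]

theorem exists_pos_lt_one_sqrt_one_sub_le {δ : ℝ} (hδ : 0 < δ) :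
    ∃ γ : ℝ, 0 < γ ∧ γ < 1 ∧ √(1 - δ) ≤ γ := by
  refine ⟨max √(1 - δ) (1 / 2), by positivity, max_lt ?_ (by norm_num), le_max_left _ _⟩
  rw [Real.sqrt_lt' one_pos]
  linarith

namespace Matrix

section Cayley

variable {ι R : Type*} [Fintype ι] [DecidableEq ι] [CommRing R]

noncomputable def cayley (M : Matrix ι ι R) : Matrix ι ι R := (1 + M)⁻¹ * (1 - M)

theorem cayley_eq_mul_inv {M : Matrix ι ι R} (h : IsUnit (1 + M)) :
    cayley M = (1 - M) * (1 + M)⁻¹ := by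
  have hdet := (isUnit_iff_isUnit_det _).mp h
  have hcomm : (1 - M) * (1 + M) = (1 + M) * (1 - M) := by noncomm_ring
  calc (1 + M)⁻¹ * (1 - M) = (1 + M)⁻¹ * ((1 - M) * (1 + M)) * (1 + M)⁻¹ := by
        rw [← Matrix.mul_assoc, mul_nonsing_inv_cancel_right _ _ hdet]
    _ = (1 - M) * (1 + M)⁻¹ := by
        rw [hcomm, nonsing_inv_mul_cancel_left _ _ hdet]

theorem cayley_conj {S : Matrix ι ι R} (hS : IsUnit S) (M : Matrix ι ι R) :
    cayley (S⁻¹ * M * S) = S⁻¹ * cayley M * S := by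
  have hdet := (isUnit_iff_isUnit_det _).mp hS
  have h_add : 1 + S⁻¹ * M * S = S⁻¹ * (1 + M) * S := by
    rw [mul_add, add_mul, mul_one, nonsing_inv_mul _ hdet]
  have h_sub : 1 - S⁻¹ * M * S = S⁻¹ * (1 - M) * S := by
    rw [mul_sub, sub_mul, mul_one, nonsing_inv_mul _ hdet]
  rw [cayley, cayley, h_add, h_sub, mul_inv_rev, mul_inv_rev, nonsing_inv_nonsing_inv _ hdet]
  simp only [Matrix.mul_assoc, mul_nonsing_inv_cancel_left _ _ hdet]

end Cayley

section Swap

variable {n R : Type*} [Fintype n] [DecidableEq n]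

theorem commute_diagonal_sum_elim_fromBlocks [Semiring R] (s : n → R) :
    Commute (diagonal (Sum.elim s s)) (fromBlocks 0 1 1 0) := by
  rw [← fromBlocks_diagonal, Commute, SemiconjBy, fromBlocks_multiply, fromBlocks_multiply]
  simp

theorem fromBlocks_zero_one_one_zero_mem_unitaryGroup [CommRing R] [StarRing R] :
    fromBlocks (0 : Matrix n n R) 1 1 0 ∈ unitaryGroup (n ⊕ n) R := by
  rw [mem_unitaryGroup_iff, star_eq_conjTranspose, fromBlocks_conjTranspose, fromBlocks_multiply]
  simp [fromBlocks_one]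

end Swap

theorem dotProduct_self_nonneg {ι R : Type*} [Fintype ι] [Ring R] [LinearOrder R]
    [IsStrictOrderedRing R] (v : ι → R) : 0 ≤ v ⬝ᵥ v :=
  Finset.sum_nonneg fun i _ => mul_self_nonneg (v i)

theorem isUnit_one_add_of_dotProduct_mulVec_nonneg {ι R : Type*} [Fintype ι] [DecidableEq ι]
    [Field R] [LinearOrder R] [IsStrictOrderedRing R] {M : Matrix ι ι R}
    (h : ∀ v, 0 ≤ v ⬝ᵥ M *ᵥ v) : IsUnit (1 + M) := by
  rw [← mulVec_injective_iff_isUnit]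
  intro u w huw
  set v := u - w
  have hv : (1 + M) *ᵥ v = 0 := by rw [mulVec_sub, huw, sub_self]
  have hsum : v ⬝ᵥ v + v ⬝ᵥ M *ᵥ v = 0 := by
    simpa [add_mulVec, dotProduct_add] using congrArg (v ⬝ᵥ ·) hv
  exact sub_eq_zero.mp (dotProduct_self_eq_zero.mp (by linarith [h v, dotProduct_self_nonneg v]))

theorem l2_opNorm_le_sqrt_sum_sq {m n : Type*} [Fintype m] [Fintype n] [DecidableEq n]
    (A : Matrix m n ℝ) : ‖A‖ ≤ √(∑ i, ∑ j, A i j ^ 2) := by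
  rw [l2_opNorm_def]
  refine ContinuousLinearMap.opNorm_le_bound _ (Real.sqrt_nonneg _) fun x => ?_
  rw [← Real.sqrt_sq (norm_nonneg x), ← Real.sqrt_sq (norm_nonneg (_ : EuclideanSpace ℝ m)),
    ← Real.sqrt_mul (by positivity)]
  refine Real.sqrt_le_sqrt ?_
  rw [EuclideanSpace.norm_sq_eq, EuclideanSpace.norm_sq_eq, Finset.sum_mul]
  gcongr with i
  simpa [mulVec, dotProduct, Real.norm_eq_abs, sq_abs] using
    Finset.sum_mul_sq_le_sq_mul_sq Finset.univ (A i) x.ofLp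

theorem l2_opNorm_le_sqrt_card_mul {m n : Type*} [Fintype m] [Fintype n] [DecidableEq n]
    {A : Matrix m n ℝ} {B : ℝ} (hB : 0 ≤ B) (h : ∀ i j, |A i j| ≤ B) :
    ‖A‖ ≤ √(Fintype.card m * Fintype.card n) * B := by
  refine (l2_opNorm_le_sqrt_sum_sq A).trans (Real.sqrt_le_iff.mpr ⟨by positivity, ?_⟩)
  calc ∑ i, ∑ j, A i j ^ 2 ≤ ∑ _i : m, ∑ _j : n, B ^ 2 := by
        refine Finset.sum_le_sum fun i _ => Finset.sum_le_sum fun j _ => ?_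
        rw [← sq_abs]
        exact pow_le_pow_left₀ (abs_nonneg _) (h i j) 2
    _ = (√(Fintype.card m * Fintype.card n) * B) ^ 2 := by
        rw [mul_pow, Real.sq_sqrt (by positivity)]
        simp [mul_assoc]

section Real

variable {ι : Type*} [Fintype ι] [DecidableEq ι]

theorem dotProduct_self_le_l2_opNorm_inv_sq_mul {S : Matrix ι ι ℝ} (hS : IsUnit S)
    (v : ι → ℝ) : v ⬝ᵥ v ≤ ‖S⁻¹‖ ^ 2 * ((S *ᵥ v) ⬝ᵥ (S *ᵥ v)) := by
  have hdet := (isUnit_iff_isUnit_det _).mp hS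
  have h := (toEuclideanCLM (𝕜 := ℝ) S⁻¹).le_opNorm (WithLp.toLp 2 (S *ᵥ v))
  rw [toEuclideanCLM_toLp, mulVec_mulVec, nonsing_inv_mul _ hdet, one_mulVec] at h
  simpa [EuclideanSpace.norm_sq_eq_dotProduct, mul_pow, ← cstar_norm_def] using
    pow_le_pow_left₀ (norm_nonneg _) h 2

theorem PosSemidef.mul_dotProduct_self_le_s16 {A : Matrix ι ι ℝ} {α : ℝ}
    (h : (A + Aᵀ - α • 1).PosSemidef) (v : ι → ℝ) : α * (v ⬝ᵥ v) ≤ 2 * (v ⬝ᵥ A *ᵥ v) := by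
  have hsymm : v ⬝ᵥ Aᵀ *ᵥ v = v ⬝ᵥ A *ᵥ v := by
    rw [mulVec_transpose, dotProduct_comm, ← dotProduct_mulVec]
  have hnonneg := h.dotProduct_mulVec_nonneg v
  simp only [star_trivial, add_mulVec, sub_mulVec, smul_mulVec, one_mulVec, dotProduct_add,
    dotProduct_sub, dotProduct_smul, smul_eq_mul, hsymm] at hnonneg
  linarith

theorem l2_opNorm_cayley_le {M : Matrix ι ι ℝ} {β c : ℝ} (hβ : 0 ≤ β)
    (hcoer : ∀ v, β * (v ⬝ᵥ v) ≤ v ⬝ᵥ M *ᵥ v) (hM : ‖M‖ ≤ c) :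
    ‖cayley M‖ ≤ √(1 - 4 * β / (1 + c) ^ 2) := by
  have hu : IsUnit (1 + M) := isUnit_one_add_of_dotProduct_mulVec_nonneg fun v =>
    (mul_nonneg hβ (dotProduct_self_nonneg v)).trans (hcoer v)
  have hdet := (isUnit_iff_isUnit_det _).mp hu
  set T := toEuclideanCLM (𝕜 := ℝ) M
  rw [cstar_norm_def]
  refine ContinuousLinearMap.opNorm_le_bound _ (Real.sqrt_nonneg _) fun y => ?_
  set z := toEuclideanCLM (𝕜 := ℝ) (1 + M)⁻¹ y
  have hy : z + T z = y := by
    simpa [z, T] using congrArg (fun X => toEuclideanCLM (𝕜 := ℝ) X y) (mul_nonsing_inv _ hdet)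
  have hcayley : toEuclideanCLM (𝕜 := ℝ) (cayley M) y = z - T z := by
    rw [cayley_eq_mul_inv hu, map_mul, map_sub, map_one]
    rfl
  have hcoer_z : β * ‖z‖ ^ 2 ≤ ⟪z, T z⟫ := by
    rw [inner_toEuclideanCLM, EuclideanSpace.norm_sq_eq_dotProduct]
    exact hcoer _
  have hc : 0 ≤ c := (norm_nonneg M).trans hM
  have hbound : ‖z + T z‖ ≤ (1 + c) * ‖z‖ := by
    have hTz : ‖T z‖ ≤ c * ‖z‖ :=
      (T.le_opNorm z).trans (mul_le_mul_of_nonneg_right hM (norm_nonneg z))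
    linarith [norm_add_le z (T z)]
  rw [hcayley, ← hy]
  exact norm_sub_le_sqrt_mul_norm_add hβ (by positivity) hcoer_z hbound

theorem l2_opNorm_conj_cayley_mul_le {S P A : Matrix ι ι ℝ} {α a : ℝ} (hS : IsUnit S)
    (hST : Sᵀ = S) (hSP : Commute S P) (hP : P ∈ unitaryGroup ι ℝ) (hα : 0 ≤ α)
    (hA : ‖A‖ ≤ a) (hdiss : (A + Aᵀ - α • 1).PosSemidef) :
    ‖S * (cayley (A * (S * S)) * P) * S⁻¹‖ ≤
      √(1 - 4 * (α / (2 * ‖S⁻¹‖ ^ 2)) / (1 + ‖S‖ ^ 2 * a) ^ 2) := by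
  have hdet := (isUnit_iff_isUnit_det _).mp hS
  have hAK : A * (S * S) = S⁻¹ * (S * A * S) * S := by
    simp only [Matrix.mul_assoc, nonsing_inv_mul_cancel_left _ _ hdet]
  have hconj : ∀ C, S * (S⁻¹ * C * S * P) * S⁻¹ = C * P := fun C => by
    rw [Matrix.mul_assoc _ S P, hSP.eq]
    simp only [Matrix.mul_assoc, mul_nonsing_inv_cancel_left _ _ hdet, mul_nonsing_inv _ hdet,
      Matrix.mul_one]
  rw [hAK, cayley_conj hS, hconj, CStarRing.norm_mul_mem_unitary _ hP]
  refine l2_opNorm_cayley_le (by positivity) (fun v => ?_) ?_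
  · have hcongr : v ⬝ᵥ (S * A * S) *ᵥ v = (S *ᵥ v) ⬝ᵥ A *ᵥ (S *ᵥ v) := by
      rw [← mulVec_mulVec, ← mulVec_mulVec, dotProduct_mulVec, ← mulVec_transpose, hST]
    have hA_coer := hdiss.mul_dotProduct_self_le_s16 (S *ᵥ v)
    have hS_coer := dotProduct_self_le_l2_opNorm_inv_sq_mul hS v
    rw [hcongr, div_mul_eq_mul_div]
    refine div_le_of_le_mul₀ (by positivity) (by nlinarith [dotProduct_self_nonneg (S *ᵥ v)]) ?_
    nlinarith
  · calc ‖S * A * S‖ ≤ ‖S‖ * ‖A‖ * ‖S‖ := norm_mul₃_le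
      _ ≤ ‖S‖ ^ 2 * a := by nlinarith [norm_nonneg S]

end Real

end Matrix

theorem dissipative_uniform_contraction_general
    (N : ℕ) (hN : 1 ≤ N)
    (K : Fin N → ℝ) (hK : ∀ k, 0 < K k)
    (A : ℝ → Matrix (Fin N ⊕ Fin N) (Fin N ⊕ Fin N) ℝ)
    (hAbdd : ∃ B : ℝ, ∀ᵐ t ∂(volume.restrict (Set.Ici (0 : ℝ))), ∀ j l, |A t j l| ≤ B)
    (α : ℝ) (hα : 0 < α)
    (hdiss : ∀ᵐ t ∂(volume.restrict (Set.Ici (0 : ℝ))),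
      (A t + (A t)ᵀ - α • (1 : Matrix (Fin N ⊕ Fin N) (Fin N ⊕ Fin N) ℝ)).PosSemidef) :
    ∃ γ : ℝ, 0 < γ ∧ γ < 1 ∧
      ∀ᵐ t ∂(volume.restrict (Set.Ici (0 : ℝ))),
        specNorm
          (Matrix.diagonal (Sum.elim (fun k => Real.sqrt (K k)) fun k => Real.sqrt (K k)) *
            (((1 : Matrix (Fin N ⊕ Fin N) (Fin N ⊕ Fin N) ℝ) +
                A t * Matrix.diagonal (Sum.elim K K))⁻¹ *
              ((1 : Matrix (Fin N ⊕ Fin N) (Fin N ⊕ Fin N) ℝ) -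
                A t * Matrix.diagonal (Sum.elim K K)) *
              Matrix.fromBlocks 0 1 1 0) *
            (Matrix.diagonal (Sum.elim (fun k => Real.sqrt (K k)) fun k => Real.sqrt (K k)))⁻¹)
          ≤ γ := by
  obtain ⟨B, hB⟩ := hAbdd
  set s : Fin N → ℝ := fun k => √(K k)
  set S := diagonal (Sum.elim s s)
  have hS : IsUnit S := isUnit_diagonal.mpr <| Pi.isUnit_iff.mpr <| by
    rintro (k | k) <;> exact (Real.sqrt_pos.mpr (hK k)).ne'.isUnit
  have hSS : diagonal (Sum.elim K K) = S * S := by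
    rw [diagonal_mul_diagonal]
    congr
    ext (k | k) <;> exact (Real.mul_self_sqrt (hK k).le).symm
  have hS_inv : 0 < ‖S⁻¹‖ := by
    have : Nonempty (Fin N) := ⟨⟨0, hN⟩⟩
    exact norm_pos_iff.mpr (isUnit_nonsing_inv_iff.mpr hS).ne_zero
  set a : ℝ := √(Fintype.card (Fin N ⊕ Fin N) * Fintype.card (Fin N ⊕ Fin N)) * |B|
  obtain ⟨γ, hγ_pos, hγ_lt, hγ⟩ := exists_pos_lt_one_sqrt_one_sub_le
    (δ := 4 * (α / (2 * ‖S⁻¹‖ ^ 2)) / (1 + ‖S‖ ^ 2 * a) ^ 2) (by positivity)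
  refine ⟨γ, hγ_pos, hγ_lt, ?_⟩
  filter_upwards [hdiss, hB] with t hdiss_t hB_t
  rw [hSS, ← cayley]
  exact (l2_opNorm_conj_cayley_mul_le hS (diagonal_transpose _)
    (commute_diagonal_sum_elim_fromBlocks s) fromBlocks_zero_one_one_zero_mem_unitaryGroup hα.le
    (l2_opNorm_le_sqrt_card_mul (abs_nonneg B) fun j l => (hB_t j l).trans (le_abs_self B))
    hdiss_t).trans hγ

/-- If `A` is measurable, essentially bounded and uniformly dissipative
(`A(t) + A(t)ᵀ ≥ α·Id`, `α > 0`, a.e. `t ≥ 0`), then there is `γ ∈ (0,1)` such that for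
a.e. `t ≥ 0` the spectral norm of
`K^{1/2} (Id + A(t)K)⁻¹ (Id − A(t)K) P₂ K^{-1/2}` is at most `γ`, where
`K = diag(K₁,…,K_N,K₁,…,K_N)` and `P₂ = ((0,Id),(Id,0))`. -/
theorem dissipative_uniform_contraction
    (N : ℕ) (hN : 1 ≤ N)
    (K : Fin N → ℝ) (hK : ∀ k, 0 < K k)
    (A : ℝ → Matrix (Fin N ⊕ Fin N) (Fin N ⊕ Fin N) ℝ)
    (hAmeas : ∀ j l, Measurable fun t => A t j l)
    (hAbdd : ∃ B : ℝ, ∀ᵐ t ∂(volume.restrict (Set.Ici (0 : ℝ))), ∀ j l, |A t j l| ≤ B)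
    (α : ℝ) (hα : 0 < α)
    (hdiss : ∀ᵐ t ∂(volume.restrict (Set.Ici (0 : ℝ))),
      (A t + (A t)ᵀ - α • (1 : Matrix (Fin N ⊕ Fin N) (Fin N ⊕ Fin N) ℝ)).PosSemidef) :
    ∃ γ : ℝ, 0 < γ ∧ γ < 1 ∧
      ∀ᵐ t ∂(volume.restrict (Set.Ici (0 : ℝ))),
        specNorm
          (Matrix.diagonal (Sum.elim (fun k => Real.sqrt (K k)) fun k => Real.sqrt (K k)) *
            (((1 : Matrix (Fin N ⊕ Fin N) (Fin N ⊕ Fin N) ℝ) +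
                A t * Matrix.diagonal (Sum.elim K K))⁻¹ *
              ((1 : Matrix (Fin N ⊕ Fin N) (Fin N ⊕ Fin N) ℝ) -
                A t * Matrix.diagonal (Sum.elim K K)) *
              Matrix.fromBlocks 0 1 1 0) *
            (Matrix.diagonal (Sum.elim (fun k => Real.sqrt (K k)) fun k => Real.sqrt (K k)))⁻¹)
          ≤ γ :=
  dissipative_uniform_contraction_general N hN K hK A hAbdd α hα hdiss
end
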